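/- arXiv:2309.14787 — 7 statements merged into one kernel-verified Lean document; each statement's English description precedes it below -/
import Mathlib

section
/- In the market clearing LP with virtual linking bids, if all inter-storage bid prices S_v are strictly positive and a feasible solution exists, then there exists an optimal solution in which the intra-storage never charges during a time period in which the inter-storage discharges (i.e., there is no t with p^{C,a}_t > 0 and sum_v p^{D,e}_{v,t} > 0). -/
open Finset

/-- Data of the market-clearing LP with virtual linking bids (VLB), with `nT` time
periods (Δt = 1), `nL` loads, `nG` generators and `nV` stored inter-storage values. -/
structure MarketData (nT nL nG nV : ℕ) where
  /-- load utilities -/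
  U : Fin nL → Fin nT → ℝ
  /-- generation costs -/
  C : Fin nG → Fin nT → ℝ
  /-- inter-storage bid prices (saved charging prices) -/
  S : Fin nV → ℝ
  /-- generation capacities -/
  Pbar : Fin nG → Fin nT → ℝ
  /-- maximum loads -/
  Dbar : Fin nL → Fin nT → ℝ
  /-- initial inter-storage energy for each value -/
  Einit : Fin nV → ℝ
  /-- storage capacity -/
  Ebar : ℝ
  /-- required final storage level -/
  Eend : ℝ

/-- A point (candidate solution) of the VLB market-clearing LP. -/
structure Sol (nT nL nG nV : ℕ) where
  /-- accepted load quantities -/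
  d : Fin nL → Fin nT → ℝ
  /-- accepted generation quantities -/
  p : Fin nG → Fin nT → ℝ
  /-- intra-storage charge (can be negative) -/
  pC : Fin nT → ℝ
  /-- inter-storage discharge for each value -/
  pD : Fin nV → Fin nT → ℝ

variable {nT nL nG nV : ℕ}

/-- Combined storage level at the end of period `t`:
`∑_{i≤t} p^{C,a}_i + ∑_v (E^init_v − ∑_{i≤t} p^{D,e}_{v,i})`. -/
def level (M : MarketData nT nL nG nV) (x : Sol nT nL nG nV) (t : Fin nT) : ℝ :=
  (∑ i ∈ Finset.univ.filter (fun i => i ≤ t), x.pC i)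
    + ∑ v, (M.Einit v - ∑ i ∈ Finset.univ.filter (fun i => i ≤ t), x.pD v i)

/-- Feasibility for the VLB market-clearing LP. -/
def Feasible (M : MarketData nT nL nG nV) (x : Sol nT nL nG nV) : Prop :=
  (∀ t, (∑ l, x.d l t) + x.pC t - (∑ g, x.p g t) - (∑ v, x.pD v t) = 0) ∧
  (∀ g t, 0 ≤ x.p g t ∧ x.p g t ≤ M.Pbar g t) ∧
  (∀ l t, 0 ≤ x.d l t ∧ x.d l t ≤ M.Dbar l t) ∧
  (0 ≤ ∑ i, x.pC i) ∧
  (∀ t, 0 ≤ level M x t ∧ level M x t ≤ M.Ebar) ∧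
  (∀ v t, 0 ≤ x.pD v t) ∧
  (∀ v, ∑ i, x.pD v i ≤ M.Einit v) ∧
  (M.Eend ≤ (∑ i, x.pC i) + ∑ v, (M.Einit v - ∑ i, x.pD v i))

/-- Objective of the VLB market-clearing LP. -/
def Obj (M : MarketData nT nL nG nV) (x : Sol nT nL nG nV) : ℝ :=
  ∑ t, ((∑ l, M.U l t * x.d l t) - (∑ g, M.C g t * x.p g t)
    - ∑ v, M.S v * x.pD v t)

/-- Optimality for the VLB market-clearing LP. -/
def IsOptimal (M : MarketData nT nL nG nV) (x : Sol nT nL nG nV) : Prop :=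
  Feasible M x ∧ ∀ y, Feasible M y → Obj M y ≤ Obj M x


/-!
Among the optimal solutions (they exist: the feasible set is a nonempty compact polytope) take
one minimising the gross intra-storage charge `∑ t, (p^{C,a}_t)⁺`. Suppose that at period `t`
the intra-storage charges while value `v` discharges, and lower both `p^{C,a}_t` and
`p^{D,e}_{v,t}` by a small `ε > 0`. The net flow into the combined storage is unchanged in every
period, so the balance and level constraints survive. If some `p^{C,a}_{t'}` is negative, raise
both quantities at `t'` by `ε` as well, which keeps the objective; otherwise all charges are
nonnegative, so `∑ p^{C,a} ≥ 0` survives the lowering, and the objective gains `S_v ε ≥ 0`.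
Either way the result is optimal with a smaller gross charge.
-/

theorem IsCompact.exists_isMaxOn_isMinOn_setOf_isMaxOn {α β γ : Type*} [TopologicalSpace α]
    [LinearOrder β] [TopologicalSpace β] [OrderClosedTopology β]
    [LinearOrder γ] [TopologicalSpace γ] [ClosedIicTopology γ]
    {s : Set α} (hs : IsCompact s) (hne : s.Nonempty) {f : α → β} {g : α → γ}
    (hf : Continuous f) (hg : Continuous g) :
    ∃ x ∈ s, IsMaxOn f s x ∧ IsMinOn g {y ∈ s | IsMaxOn f s y} x := by
  obtain ⟨x₀, hx₀s, hx₀⟩ := hs.exists_isMaxOn hne hf.continuousOn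
  have hT : IsCompact (s ∩ {y | f x₀ ≤ f y}) := hs.inter_right (isClosed_le continuous_const hf)
  obtain ⟨x, ⟨hxs, hfx⟩, hx⟩ := hT.exists_isMinOn ⟨x₀, hx₀s, le_rfl⟩ hg.continuousOn
  exact ⟨x, hxs, fun z hz => (hx₀ hz).trans hfx, fun y ⟨hys, hy⟩ => hx ⟨hys, hy hx₀s⟩⟩

lemma Fintype.sum_comp_add_single {ι M N : Type*} [Fintype ι] [DecidableEq ι] [AddCommMonoid M]
    [AddCommGroup N] (g : M → N) (f : ι → M) (i : ι) (c : M) :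
    ∑ j, g (f j + (Pi.single i c : ι → M) j) = ∑ j, g (f j) + (g (f i + c) - g (f i)) := by
  have h (j : ι) :
      g (f j + (Pi.single i c : ι → M) j)
        = g (f j) + (Pi.single i (g (f i + c) - g (f i)) : ι → N) j := by
    rcases eq_or_ne j i with rfl | hj
    · simp
    · simp [hj]
  simp only [h, sum_add_distrib, Fintype.sum_pi_single']

lemma Fintype.le_sum_abs {ι : Type*} [Fintype ι] (f : ι → ℝ) (i : ι) : f i ≤ ∑ j, |f j| :=
  (le_abs_self _).trans <|
    single_le_sum (f := fun j => |f j|) (fun _ _ => abs_nonneg _) (mem_univ i)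

namespace Sol

def shiftStorage (v : Fin nV) (δ : Fin nT → ℝ) (x : Sol nT nL nG nV) : Sol nT nL nG nV :=
  { x with pC := x.pC + δ, pD := x.pD + Pi.single v δ }

def netCharge (x : Sol nT nL nG nV) (i : Fin nT) : ℝ := x.pC i - ∑ w, x.pD w i

def grossCharge (x : Sol nT nL nG nV) : ℝ := ∑ t, (x.pC t)⁺

variable (v : Fin nV) (δ : Fin nT → ℝ) (x : Sol nT nL nG nV)

lemma sum_pD_shiftStorage (i : Fin nT) :
    ∑ w, (x.shiftStorage v δ).pD w i = ∑ w, x.pD w i + δ i := by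
  simp [shiftStorage, sum_add_distrib, Pi.single_apply, ite_apply]

lemma netCharge_shiftStorage : (x.shiftStorage v δ).netCharge = x.netCharge := by
  ext i
  rw [netCharge, netCharge, sum_pD_shiftStorage]
  simp [shiftStorage]

end Sol

section ShiftStorage

variable (M : MarketData nT nL nG nV) (x : Sol nT nL nG nV) (v : Fin nV) (δ : Fin nT → ℝ)

/-- The energy held by the combined storage once the periods in `s` have passed; `level M x t`
is `storedEnergy M x {i | i ≤ t}` and the final-level constraint bounds `storedEnergy M x univ`. -/
def storedEnergy (s : Finset (Fin nT)) : ℝ :=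
  (∑ i ∈ s, x.pC i) + ∑ w, (M.Einit w - ∑ i ∈ s, x.pD w i)

lemma storedEnergy_eq (s : Finset (Fin nT)) :
    storedEnergy M x s = ∑ w, M.Einit w + ∑ i ∈ s, x.netCharge i := by
  simp only [storedEnergy, Sol.netCharge, sum_sub_distrib]
  rw [sum_comm (s := univ)]
  ring

lemma storedEnergy_shiftStorage (s : Finset (Fin nT)) :
    storedEnergy M (x.shiftStorage v δ) s = storedEnergy M x s := by
  simp only [storedEnergy_eq, Sol.netCharge_shiftStorage]

lemma level_shiftStorage (t : Fin nT) : level M (x.shiftStorage v δ) t = level M x t :=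
  storedEnergy_shiftStorage M x v δ _

lemma obj_shiftStorage : Obj M (x.shiftStorage v δ) = Obj M x - M.S v * ∑ i, δ i := by
  have hpD (i : Fin nT) :
      ∑ w, M.S w * (x.shiftStorage v δ).pD w i = ∑ w, M.S w * x.pD w i + M.S v * δ i := by
    simp [Sol.shiftStorage, mul_add, sum_add_distrib, Pi.single_apply, ite_apply]
  simp only [Obj, hpD, mul_sum, ← sum_sub_distrib]
  exact sum_congr rfl fun i _ => by simp only [Sol.shiftStorage]; ring

variable {M x v δ}

lemma Feasible.shiftStorage (hx : Feasible M x) (hpD : ∀ i, 0 ≤ x.pD v i + δ i)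
    (hδ : ∑ i, δ i ≤ 0) (hpC : 0 ≤ ∑ i, x.pC i + ∑ i, δ i) :
    Feasible M (x.shiftStorage v δ) := by
  obtain ⟨hbal, hp, hd, -, hlevel, hpD_nonneg, hpD_le, hend⟩ := hx
  refine ⟨fun t => ?_, hp, hd, ?_, fun t => level_shiftStorage M x v δ t ▸ hlevel t,
    fun w t => ?_, fun w => ?_, ?_⟩
  · rw [Sol.sum_pD_shiftStorage]
    simp only [Sol.shiftStorage, Pi.add_apply]
    linarith [hbal t]
  · simpa [Sol.shiftStorage, sum_add_distrib] using hpC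
  · rcases eq_or_ne w v with rfl | hw
    · simpa [Sol.shiftStorage] using hpD t
    · simpa [Sol.shiftStorage, hw] using hpD_nonneg w t
  · rcases eq_or_ne w v with rfl | hw
    · simp only [Sol.shiftStorage, Pi.add_apply, Pi.single_eq_same, sum_add_distrib]
      linarith [hpD_le w]
    · simpa [Sol.shiftStorage, hw] using hpD_le w
  · change M.Eend ≤ storedEnergy M _ univ
    rwa [storedEnergy_shiftStorage]

lemma IsOptimal.shiftStorage (hx : IsOptimal M x) (hpD : ∀ i, 0 ≤ x.pD v i + δ i)
    (hδ : ∑ i, δ i ≤ 0) (hpC : 0 ≤ ∑ i, x.pC i + ∑ i, δ i) (hSδ : M.S v * ∑ i, δ i ≤ 0) :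
    IsOptimal M (x.shiftStorage v δ) := by
  refine ⟨hx.1.shiftStorage hpD hδ hpC, fun y hy => ?_⟩
  rw [obj_shiftStorage]
  linarith [hx.2 y hy]

lemma IsOptimal.exists_grossCharge_lt_of_pC_neg (hx : IsOptimal M x) {t t' : Fin nT}
    (hC : 0 < x.pC t) (hD : 0 < x.pD v t) (ht' : x.pC t' < 0) :
    ∃ y, IsOptimal M y ∧ y.grossCharge < x.grossCharge := by
  obtain ⟨-, -, -, hpC, -, hpD, -, -⟩ := hx.1
  have htt' : t' ≠ t := by rintro rfl; linarith
  set ε := min (min (x.pC t) (x.pD v t)) (-x.pC t')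
  have hε : 0 < ε := lt_min (lt_min hC hD) (neg_pos.2 ht')
  have hεC : ε ≤ x.pC t := (min_le_left _ _).trans (min_le_left _ _)
  have hεD : ε ≤ x.pD v t := (min_le_left _ _).trans (min_le_right _ _)
  have hεt' : ε ≤ -x.pC t' := min_le_right _ _
  set δ : Fin nT → ℝ := Pi.single t (-ε) + Pi.single t' ε
  have hδ : ∑ i, δ i = 0 := by simp [δ, sum_add_distrib]
  refine ⟨x.shiftStorage v δ, hx.shiftStorage (fun i => ?_) hδ.le (by rwa [hδ, add_zero])
    (by rw [hδ, mul_zero]), ?_⟩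
  · rcases eq_or_ne i t with rfl | hi
    · simp only [δ, Pi.add_apply, Pi.single_eq_same, Pi.single_eq_of_ne htt'.symm]; linarith
    · rcases eq_or_ne i t' with rfl | hi'
      · simp only [δ, Pi.add_apply, Pi.single_eq_of_ne hi, Pi.single_eq_same]; linarith [hpD v i]
      · simpa [δ, hi, hi'] using hpD v i
  · simp only [Sol.grossCharge, Sol.shiftStorage, δ, Pi.add_apply, ← add_assoc]
    rw [Fintype.sum_comp_add_single (·⁺) (fun j => x.pC j + (Pi.single t (-ε) : Fin nT → ℝ) j),
      Fintype.sum_comp_add_single (·⁺)]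
    simp only [Pi.single_eq_of_ne htt', add_zero]
    rw [posPart_eq_self.2 (by linarith : 0 ≤ x.pC t + -ε),
      posPart_eq_zero.2 (by linarith : x.pC t' + ε ≤ 0), posPart_eq_zero.2 ht'.le,
      posPart_eq_self.2 hC.le]
    linarith

lemma IsOptimal.exists_grossCharge_lt_of_pC_nonneg (hx : IsOptimal M x) (hS : 0 ≤ M.S v)
    {t : Fin nT} (hC : 0 < x.pC t) (hD : 0 < x.pD v t) (hpC : ∀ t', 0 ≤ x.pC t') :
    ∃ y, IsOptimal M y ∧ y.grossCharge < x.grossCharge := by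
  obtain ⟨-, -, -, -, -, hpD, -, -⟩ := hx.1
  set ε := min (x.pC t) (x.pD v t)
  have hε : 0 < ε := lt_min hC hD
  have hεC : ε ≤ x.pC t := min_le_left _ _
  have hεD : ε ≤ x.pD v t := min_le_right _ _
  have hδ : ∑ i, (Pi.single t (-ε) : Fin nT → ℝ) i = -ε := Fintype.sum_pi_single' _ _
  have hsum : x.pC t ≤ ∑ i, x.pC i := single_le_sum (fun i _ => hpC i) (mem_univ t)
  refine ⟨x.shiftStorage v (Pi.single t (-ε)), hx.shiftStorage (fun i => ?_)
    (by rw [hδ]; linarith) (by rw [hδ]; linarith)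
    (by rw [hδ]; exact mul_nonpos_of_nonneg_of_nonpos hS (by linarith)), ?_⟩
  · rcases eq_or_ne i t with rfl | hi
    · rw [Pi.single_eq_same]; linarith
    · simpa [hi] using hpD v i
  · simp only [Sol.grossCharge, Sol.shiftStorage, Pi.add_apply, Fintype.sum_comp_add_single (·⁺)]
    rw [posPart_eq_self.2 (by linarith : 0 ≤ x.pC t + -ε), posPart_eq_self.2 hC.le]
    linarith

lemma IsOptimal.exists_grossCharge_lt (hx : IsOptimal M x) (hS : 0 ≤ M.S v) {t : Fin nT}
    (hC : 0 < x.pC t) (hD : 0 < x.pD v t) :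
    ∃ y, IsOptimal M y ∧ y.grossCharge < x.grossCharge := by
  by_cases hneg : ∃ t', x.pC t' < 0
  · obtain ⟨t', ht'⟩ := hneg
    exact hx.exists_grossCharge_lt_of_pC_neg hC hD ht'
  · push Not at hneg
    exact hx.exists_grossCharge_lt_of_pC_nonneg hS hC hD hneg

end ShiftStorage

section Existence

abbrev SolSpace (nT nL nG nV : ℕ) :=
  (Fin nL → Fin nT → ℝ) × (Fin nG → Fin nT → ℝ) × (Fin nT → ℝ) × (Fin nV → Fin nT → ℝ)

def Sol.ofProd (e : SolSpace nT nL nG nV) : Sol nT nL nG nV := ⟨e.1, e.2.1, e.2.2.1, e.2.2.2⟩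

def Sol.toProd (x : Sol nT nL nG nV) : SolSpace nT nL nG nV := (x.d, x.p, x.pC, x.pD)

variable (M : MarketData nT nL nG nV)

lemma continuous_obj_ofProd : Continuous fun e : SolSpace nT nL nG nV => Obj M (.ofProd e) := by
  unfold Obj Sol.ofProd
  fun_prop

lemma continuous_grossCharge_ofProd :
    Continuous fun e : SolSpace nT nL nG nV => (Sol.ofProd e).grossCharge := by
  unfold Sol.grossCharge Sol.ofProd
  fun_prop

lemma isClosed_setOf_feasible_ofProd :
    IsClosed {e : SolSpace nT nL nG nV | Feasible M (.ofProd e)} := by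
  simp only [Feasible, level, Sol.ofProd, Set.ofPred_and, Set.ofPred_forall]
  repeat' first
    | apply IsClosed.inter | refine isClosed_iInter fun _ => ?_
    | apply isClosed_le | apply isClosed_eq
  all_goals fun_prop

def solBound : ℝ :=
  ∑ l, ∑ t, |M.Dbar l t| + ∑ g, ∑ t, |M.Pbar g t| + ∑ v, |M.Einit v|

variable {M} in
lemma Feasible.norm_toProd_le {x : Sol nT nL nG nV} (hx : Feasible M x) :
    ‖x.toProd‖ ≤ solBound M := by
  obtain ⟨hbal, hp, hd, -, -, hpD, hpD_le, -⟩ := hx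
  have hd_sum (t) : ∑ l, x.d l t ≤ ∑ l, ∑ t, |M.Dbar l t| :=
    sum_le_sum fun l _ => (hd l t).2.trans (Fintype.le_sum_abs _ t)
  have hp_sum (t) : ∑ g, x.p g t ≤ ∑ g, ∑ t, |M.Pbar g t| :=
    sum_le_sum fun g _ => (hp g t).2.trans (Fintype.le_sum_abs _ t)
  have hpD_sum (t) : ∑ v, x.pD v t ≤ ∑ v, |M.Einit v| :=
    sum_le_sum fun v _ => (single_le_sum (fun i _ => hpD v i) (mem_univ t)).trans <|
      (hpD_le v).trans (le_abs_self _)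
  have hd_nonneg (t) : 0 ≤ ∑ l, x.d l t := sum_nonneg fun l _ => (hd l t).1
  have hp_nonneg (t) : 0 ≤ ∑ g, x.p g t := sum_nonneg fun g _ => (hp g t).1
  have hpD_nonneg (t) : 0 ≤ ∑ v, x.pD v t := sum_nonneg fun v _ => hpD v t
  have hD : 0 ≤ ∑ l, ∑ t, |M.Dbar l t| := by positivity
  have hP : 0 ≤ ∑ g, ∑ t, |M.Pbar g t| := by positivity
  have hE : 0 ≤ ∑ v, |M.Einit v| := by positivity
  have hR : 0 ≤ solBound M := add_nonneg (add_nonneg hD hP) hE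
  simp only [Sol.toProd, norm_prod_le_iff, pi_norm_le_iff_of_nonneg hR, Real.norm_eq_abs, abs_le]
  unfold solBound
  refine ⟨fun l t => ?_, fun g t => ?_, fun t => ?_, fun v t => ?_⟩
  · have := single_le_sum (fun l _ => (hd l t).1) (mem_univ l)
    constructor <;> linarith [(hd l t).1, hd_sum t]
  · have := single_le_sum (fun g _ => (hp g t).1) (mem_univ g)
    constructor <;> linarith [(hp g t).1, hp_sum t]
  · constructor <;> linarith [hbal t, hd_sum t, hp_sum t, hpD_sum t, hd_nonneg t, hp_nonneg t,
      hpD_nonneg t]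
  · have := single_le_sum (fun v _ => hpD v t) (mem_univ v)
    constructor <;> linarith [hpD v t, hpD_sum t]

lemma isCompact_setOf_feasible_ofProd :
    IsCompact {e : SolSpace nT nL nG nV | Feasible M (.ofProd e)} :=
  Metric.isCompact_of_isClosed_isBounded (isClosed_setOf_feasible_ofProd M) <|
    isBounded_iff_forall_norm_le.2 ⟨solBound M, fun _ he => he.norm_toProd_le⟩

lemma exists_isOptimal_isMinOn_grossCharge (hfeas : ∃ x, Feasible M x) :
    ∃ x, IsOptimal M x ∧ IsMinOn Sol.grossCharge {y | IsOptimal M y} x := by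
  obtain ⟨x₀, hx₀⟩ := hfeas
  obtain ⟨e, he, hmax, hmin⟩ :=
    (isCompact_setOf_feasible_ofProd M).exists_isMaxOn_isMinOn_setOf_isMaxOn ⟨x₀.toProd, hx₀⟩
      (continuous_obj_ofProd M) continuous_grossCharge_ofProd
  refine ⟨.ofProd e, ⟨he, fun y hy => hmax (a := y.toProd) hy⟩, fun y hy => ?_⟩
  exact hmin (a := y.toProd) ⟨hy.1, fun z hz => hy.2 (.ofProd z) hz⟩

end Existence

/-- If all inter-storage bid prices are strictly positive and a feasible
solution exists, then there exists an optimal solution of the VLB market-clearing LP in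
which the intra-storage never charges in a period where the inter-storage discharges. -/
theorem exists_optimal_no_simultaneous_charge_discharge
    (M : MarketData nT nL nG nV)
    (hS : ∀ v, 0 < M.S v) (hfeas : ∃ x, Feasible M x) :
    ∃ x : Sol nT nL nG nV, IsOptimal M x ∧
      ∀ t, ¬ (0 < x.pC t ∧ 0 < ∑ v, x.pD v t) := by
  obtain ⟨x, hx, hmin⟩ := exists_isOptimal_isMinOn_grossCharge M hfeas
  refine ⟨x, hx, fun t ⟨hC, hD⟩ => ?_⟩
  obtain ⟨v, -, hv⟩ := exists_lt_of_sum_lt (f := fun _ => (0 : ℝ)) (by simpa using hD)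
  obtain ⟨y, hy, hlt⟩ := hx.exists_grossCharge_lt (hS v).le hC hv
  exact (hmin hy).not_gt hlt
end

section
/- Let x* be an optimal solution of the market clearing LP with virtual linking bids with all S_v > 0. If there is a time period τ with p^{C,a*}_τ > 0 and sum_v p^{D,e*}_{v,τ} > 0, then there must exist another time period κ ≠ τ with p^{C,a*}_κ < 0. -/
open Finset

variable {nT nL nG nV : ℕ}

/-! If the intra-storage never discharges, part of the inter-storage discharge at `τ` can be
traded for intra-storage charge: lowering every `p^{D,e}_{v,τ}` by the fraction `r` and
`p^{C,a}_τ` by the same total leaves the power balance and every storage level unchanged. With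
`r ≤ 1` and `r ∑_v p^{D,e}_{v,τ} ≤ p^{C,a}_τ ≤ ∑_t p^{C,a}_t` (all charges being nonnegative) the
traded point is feasible, and it gains `r ∑_v S_v p^{D,e}_{v,τ} > 0` in welfare. -/

lemma Finset.sum_mul_pos_of_pos_of_nonneg {ι : Type*} {s : Finset ι} {w f : ι → ℝ}
    (hw : ∀ i ∈ s, 0 < w i) (hf : ∀ i ∈ s, 0 ≤ f i) (hsum : 0 < ∑ i ∈ s, f i) :
    0 < ∑ i ∈ s, w i * f i := by
  obtain ⟨i, hi, hfi⟩ := exists_lt_of_sum_lt (f := fun _ => (0 : ℝ)) (by simpa using hsum)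
  exact sum_pos' (fun j hj => mul_nonneg (hw j hj).le (hf j hj))
    ⟨i, hi, mul_pos (hw i hi) hfi⟩

namespace Sol

def tradeAt (x : Sol nT nL nG nV) (τ : Fin nT) (r : ℝ) : Sol nT nL nG nV where
  d := x.d
  p := x.p
  pC := x.pC - Pi.single τ (r * ∑ v, x.pD v τ)
  pD v := x.pD v - Pi.single τ (r * x.pD v τ)

variable (x : Sol nT nL nG nV) (τ : Fin nT) (r : ℝ)

lemma tradeAt_pC_sub_sum_pD (t : Fin nT) :
    (x.tradeAt τ r).pC t - ∑ v, (x.tradeAt τ r).pD v t = x.pC t - ∑ v, x.pD v t := by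
  rcases eq_or_ne t τ with rfl | ht
  · simp [tradeAt, sum_sub_distrib, mul_sum]
  · simp [tradeAt, ht]

lemma sum_tradeAt_pC (s : Finset (Fin nT)) :
    ∑ i ∈ s, (x.tradeAt τ r).pC i
      = ∑ i ∈ s, x.pC i - if τ ∈ s then r * ∑ v, x.pD v τ else 0 := by
  simp [tradeAt, sum_sub_distrib, sum_pi_single']

lemma sum_tradeAt_pD (v : Fin nV) (s : Finset (Fin nT)) :
    ∑ i ∈ s, (x.tradeAt τ r).pD v i
      = ∑ i ∈ s, x.pD v i - if τ ∈ s then r * x.pD v τ else 0 := by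
  simp [tradeAt, sum_sub_distrib, sum_pi_single']

lemma stored_tradeAt (E : Fin nV → ℝ) (s : Finset (Fin nT)) :
    ∑ i ∈ s, (x.tradeAt τ r).pC i + ∑ v, (E v - ∑ i ∈ s, (x.tradeAt τ r).pD v i)
      = ∑ i ∈ s, x.pC i + ∑ v, (E v - ∑ i ∈ s, x.pD v i) := by
  simp only [sum_tradeAt_pC, sum_tradeAt_pD]
  split_ifs
  · simp only [sum_sub_distrib, mul_sum]
    ring
  · simp

variable {x τ r} in
lemma feasible_tradeAt {M : MarketData nT nL nG nV} (hx : Feasible M x) (hr₀ : 0 ≤ r)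
    (hr₁ : r ≤ 1) (hC : r * ∑ v, x.pD v τ ≤ ∑ i, x.pC i) : Feasible M (x.tradeAt τ r) := by
  obtain ⟨hbal, hp, hd, -, hlev, hD, hDcap, hend⟩ := hx
  refine ⟨fun t => ?_, hp, hd, ?_, fun t => ?_, fun v t => ?_, fun v => ?_, ?_⟩
  · have := x.tradeAt_pC_sub_sum_pD τ r t
    simp only [tradeAt] at this ⊢
    linarith [hbal t]
  · simpa [sum_tradeAt_pC] using hC
  · simpa only [level, stored_tradeAt] using hlev t
  · rcases eq_or_ne t τ with rfl | ht
    · simpa [tradeAt, ← one_sub_mul] using mul_nonneg (sub_nonneg.2 hr₁) (hD v t)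
    · simpa [tradeAt, ht] using hD v t
  · simpa [sum_tradeAt_pD] using (hDcap v).trans' (sub_le_self _ (mul_nonneg hr₀ (hD v τ)))
  · simpa only [stored_tradeAt] using hend

lemma obj_tradeAt (M : MarketData nT nL nG nV) :
    Obj M (x.tradeAt τ r) = Obj M x + r * ∑ v, M.S v * x.pD v τ := by
  have hgain : ∑ t, ∑ v, M.S v * (Pi.single τ (r * x.pD v τ) : Fin nT → ℝ) t
      = r * ∑ v, M.S v * x.pD v τ := by
    rw [sum_comm]
    simp [Pi.single_apply, mul_sum, mul_left_comm]
  simp only [Obj, tradeAt, Pi.sub_apply, mul_sub, sum_sub_distrib, hgain]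
  ring

end Sol

/-- If an optimal solution (with all `S_v > 0`) simultaneously charges the
intra-storage and discharges the inter-storage at some period `τ`, then there is another
period `κ ≠ τ` in which the intra-storage discharges (`p^{C,a*}_κ < 0`). -/
theorem exists_intra_discharging_period
    (M : MarketData nT nL nG nV) (x : Sol nT nL nG nV)
    (hS : ∀ v, 0 < M.S v) (hopt : IsOptimal M x)
    (τ : Fin nT) (hτC : 0 < x.pC τ) (hτD : 0 < ∑ v, x.pD v τ) :
    ∃ κ : Fin nT, κ ≠ τ ∧ x.pC κ < 0 := by
  by_contra! hcharge
  obtain ⟨hx, hmax⟩ := hopt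
  have hD : ∀ v t, 0 ≤ x.pD v t := hx.2.2.2.2.2.1
  set D := ∑ v, x.pD v τ
  set r := min 1 (x.pC τ / D)
  have hr : 0 < r := lt_min one_pos (div_pos hτC hτD)
  have hrD : r * D ≤ ∑ i, x.pC i := calc
    r * D ≤ x.pC τ / D * D := mul_le_mul_of_nonneg_right (min_le_right _ _) hτD.le
    _ = x.pC τ := div_mul_cancel₀ _ hτD.ne'
    _ ≤ ∑ i, x.pC i := single_le_sum (fun i _ => by
        rcases eq_or_ne i τ with rfl | hi
        exacts [hτC.le, hcharge i hi]) (mem_univ τ)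
  have hgain : 0 < ∑ v, M.S v * x.pD v τ :=
    sum_mul_pos_of_pos_of_nonneg (fun v _ => hS v) (fun v _ => hD v τ) hτD
  have hle := hmax _ (Sol.feasible_tradeAt hx hr.le (min_le_left _ _) hrD)
  rw [Sol.obj_tradeAt] at hle
  linarith [mul_pos hr hgain]
end

section
/- Let x* be a feasible solution of the market clearing LP with virtual linking bids, τ a time period with p^{C,a*}_τ > 0 and q^τ := sum_v p^{D,e*}_{v,τ} > 0, and κ ≠ τ a period with p^{C,a*}_κ < 0. Define q' = min{q^τ, -p^{C,a*}_κ} and choose q'_v with sum_v q'_v = q' and 0 ≤ q'_v ≤ p^{D,e*}_{v,τ}. Then the modified point x' obtained by setting p^{C,a'}_τ = p^{C,a*}_τ - q', p^{D,e'}_{v,τ} = p^{D,e*}_{v,τ} - q'_v, p^{C,a'}_κ = p^{C,a*}_κ + q', p^{D,e'}_{v,κ} = p^{D,e*}_{v,κ} + q'_v (all other variables unchanged) is feasible and has the same objective value as x*. -/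
open Finset

variable {nT nL nG nV : ℕ}

/-- The swap modification from the proof of the main proposition: decrease the
intra-storage charge and the inter-storage discharges at `τ` by `q` (resp. `qv v`),
and increase them at `κ` by the same amounts; all other variables are unchanged. -/
def swap (x : Sol nT nL nG nV) (τ κ : Fin nT) (q : ℝ) (qv : Fin nV → ℝ) :
    Sol nT nL nG nV where
  d := x.d
  p := x.p
  pC := fun t => if t = τ then x.pC τ - q else if t = κ then x.pC κ + q else x.pC t
  pD := fun v t =>
    if t = τ then x.pD v τ - qv v else if t = κ then x.pD v κ + qv v else x.pD v t

/-!
The swap moves `q` units of intra-storage charge, and `q_v` units of each inter-storage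
discharge, from `τ` to `κ`. Since `∑_v q_v = q`, the net charge `p^{C,a}_t − ∑_v p^{D,e}_{v,t}`
of every period is unchanged, and the power balances, the storage levels and the final level
depend on the storage variables only through these net charges. Since `κ ≠ τ`, what is removed
at `τ` is added back at `κ`, so the totals `∑_t p^{C,a}_t` and `∑_t p^{D,e}_{v,t}` are unchanged
too; they are all the objective sees of the storage.
-/

theorem ite_transfer_eq {ι G : Type*} [DecidableEq ι] [AddCommGroup G] (f : ι → G)
    {τ κ : ι} (hne : κ ≠ τ) (a : G) (t : ι) :
    (if t = τ then f τ - a else if t = κ then f κ + a else f t)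
      = f t - (Pi.single τ a : ι → G) t + (Pi.single κ a : ι → G) t := by
  by_cases hτ : t = τ
  · subst hτ
    simp [Ne.symm hne]
  · by_cases hκ : t = κ
    · subst hκ
      simp [hτ]
    · simp [hτ, hκ]

theorem sum_ite_transfer {ι G : Type*} [Fintype ι] [DecidableEq ι] [AddCommGroup G]
    (f : ι → G) {τ κ : ι} (hne : κ ≠ τ) (a : G) :
    ∑ t, (if t = τ then f τ - a else if t = κ then f κ + a else f t) = ∑ t, f t := by
  simp only [ite_transfer_eq f hne, sum_add_distrib, sum_sub_distrib,
    Fintype.sum_pi_single']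
  abel

def netCharge (x : Sol nT nL nG nV) (t : Fin nT) : ℝ :=
  x.pC t - ∑ v, x.pD v t

theorem sum_pC_add_sum_remaining_eq (M : MarketData nT nL nG nV) (x : Sol nT nL nG nV)
    (s : Finset (Fin nT)) :
    ∑ i ∈ s, x.pC i + ∑ v, (M.Einit v - ∑ i ∈ s, x.pD v i)
      = ∑ i ∈ s, netCharge x i + ∑ v, M.Einit v := by
  simp only [netCharge, sum_sub_distrib, sum_comm (s := s)]
  ring

theorem level_eq_sum_netCharge (M : MarketData nT nL nG nV) (x : Sol nT nL nG nV)
    (t : Fin nT) :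
    level M x t = ∑ i ∈ univ.filter (· ≤ t), netCharge x i + ∑ v, M.Einit v :=
  sum_pC_add_sum_remaining_eq M x _

section Swap

variable (x : Sol nT nL nG nV) {τ κ : Fin nT} {q : ℝ} {qv : Fin nV → ℝ}

theorem netCharge_swap (hqsum : ∑ v, qv v = q) (t : Fin nT) :
    netCharge (swap x τ κ q qv) t = netCharge x t := by
  simp only [netCharge, swap]
  split_ifs with hτ hκ
  · rw [sum_sub_distrib, hqsum, hτ]
    ring
  · rw [sum_add_distrib, hqsum, hκ]
    ring
  · rfl

theorem sum_swap_pC (hne : κ ≠ τ) :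
    ∑ t, (swap x τ κ q qv).pC t = ∑ t, x.pC t :=
  sum_ite_transfer x.pC hne q

theorem sum_swap_pD (hne : κ ≠ τ) (v : Fin nV) :
    ∑ t, (swap x τ κ q qv).pD v t = ∑ t, x.pD v t :=
  sum_ite_transfer (x.pD v) hne (qv v)

theorem swap_pD_nonneg (hD : ∀ v t, 0 ≤ x.pD v t) (hqv : ∀ v, 0 ≤ qv v ∧ qv v ≤ x.pD v τ)
    (v : Fin nV) (t : Fin nT) : 0 ≤ (swap x τ κ q qv).pD v t := by
  simp only [swap]
  split_ifs
  · linarith [hqv v]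
  · linarith [hD v κ, hqv v]
  · exact hD v t

end Swap

theorem feasible_swap {M : MarketData nT nL nG nV} {x : Sol nT nL nG nV}
    {τ κ : Fin nT} {q : ℝ} {qv : Fin nV → ℝ} (hx : Feasible M x) (hne : κ ≠ τ)
    (hqsum : ∑ v, qv v = q) (hqv : ∀ v, 0 ≤ qv v ∧ qv v ≤ x.pD v τ) :
    Feasible M (swap x τ κ q qv) := by
  obtain ⟨hbal, hp, hd, hCtot, hlvl, hD, hDtot, hend⟩ := hx
  have hnet := netCharge_swap x (τ := τ) (κ := κ) hqsum
  refine ⟨fun t => ?_, hp, hd, ?_, fun t => ?_, swap_pD_nonneg x hD hqv,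
    fun v => ?_, ?_⟩
  · have hnet_t := hnet t
    simp only [netCharge] at hnet_t
    change ∑ l, x.d l t + _ - ∑ g, x.p g t - _ = 0
    linarith [hbal t]
  · rwa [sum_swap_pC x hne]
  · simpa only [level_eq_sum_netCharge, hnet] using hlvl t
  · rw [sum_swap_pD x hne]
    exact hDtot v
  · simpa only [sum_pC_add_sum_remaining_eq, hnet] using hend

theorem Obj_eq_sub_sum_S_mul_sum_pD (M : MarketData nT nL nG nV) (x : Sol nT nL nG nV) :
    Obj M x = ∑ t, ((∑ l, M.U l t * x.d l t) - ∑ g, M.C g t * x.p g t)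
      - ∑ v, M.S v * ∑ t, x.pD v t := by
  simp only [Obj, sum_sub_distrib, mul_sum, sum_comm (γ := Fin nT)]

theorem Obj_swap (M : MarketData nT nL nG nV) (x : Sol nT nL nG nV) {τ κ : Fin nT}
    (hne : κ ≠ τ) (q : ℝ) (qv : Fin nV → ℝ) :
    Obj M (swap x τ κ q qv) = Obj M x := by
  simp only [Obj_eq_sub_sum_S_mul_sum_pD, sum_swap_pD x hne]
  rfl

theorem swap_feasible_and_same_objective_general
    (M : MarketData nT nL nG nV) (x : Sol nT nL nG nV) (hfeas : Feasible M x)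
    (τ κ : Fin nT) (hne : κ ≠ τ)
    (q : ℝ)
    (qv : Fin nV → ℝ) (hqsum : ∑ v, qv v = q)
    (hqv : ∀ v, 0 ≤ qv v ∧ qv v ≤ x.pD v τ) :
    Feasible M (swap x τ κ q qv) ∧ Obj M (swap x τ κ q qv) = Obj M x :=
  ⟨feasible_swap hfeas hne hqsum hqv, Obj_swap M x hne q qv⟩

/-- Given a feasible solution with simultaneous intra-charge and
inter-discharge at `τ` and intra-discharge at `κ ≠ τ`, the swapped point with
`q' = min{q^τ, −p^{C,a*}_κ}` and any split `q'_v` with `∑_v q'_v = q'`,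
`0 ≤ q'_v ≤ p^{D,e*}_{v,τ}`, is feasible and has the same objective value. -/
theorem swap_feasible_and_same_objective
    (M : MarketData nT nL nG nV) (x : Sol nT nL nG nV) (hfeas : Feasible M x)
    (τ κ : Fin nT) (hne : κ ≠ τ)
    (hτC : 0 < x.pC τ) (hτD : 0 < ∑ v, x.pD v τ) (hκ : x.pC κ < 0)
    (q : ℝ) (hq : q = min (∑ v, x.pD v τ) (-x.pC κ))
    (qv : Fin nV → ℝ) (hqsum : ∑ v, qv v = q)
    (hqv : ∀ v, 0 ≤ qv v ∧ qv v ≤ x.pD v τ) :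
    Feasible M (swap x τ κ q qv) ∧ Obj M (swap x τ κ q qv) = Obj M x :=
  swap_feasible_and_same_objective_general M x hfeas τ κ hne q qv hqsum hqv
end

section
/- If |T| = 1 (a single time period), then in any optimal solution of the VLB market clearing LP with all S_v > 0, it cannot hold that p^{C,a}_1 > 0 and sum_v p^{D,e}_{v,1} > 0 simultaneously. -/
open Finset

variable {nT nL nG nV : ℕ}

/-! If total intra-storage charge is positive while inter-storage energy is discharged in
period `t`, scale that discharge down by a factor `1 - θ` and lower the intra-storage charge
of period `t` by the same amount `θ ∑ᵥ p^{D,e}_{v,t}`. The power balance and every storage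
level are unchanged, all bounds still hold for small `θ > 0`, and the objective rises by
`θ ∑ᵥ S_v p^{D,e}_{v,t} > 0`, contradicting optimality. With one period, the total charge is
`p^{C,a}_1`. -/

namespace Sol

def curtail (x : Sol nT nL nG nV) (t : Fin nT) (θ : ℝ) : Sol nT nL nG nV where
  d := x.d
  p := x.p
  pC i := x.pC i - (Pi.single t θ : Fin nT → ℝ) i * ∑ v, x.pD v t
  pD v i := x.pD v i - (Pi.single t θ : Fin nT → ℝ) i * x.pD v t

variable {M : MarketData nT nL nG nV} {x : Sol nT nL nG nV} {t : Fin nT} {θ : ℝ}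

theorem sum_pC_curtail : ∑ i, (x.curtail t θ).pC i = ∑ i, x.pC i - θ * ∑ v, x.pD v t := by
  simp only [curtail, sum_sub_distrib, ← sum_mul, Fintype.sum_pi_single']

theorem sum_pD_curtail (v : Fin nV) :
    ∑ i, (x.curtail t θ).pD v i = ∑ i, x.pD v i - θ * x.pD v t := by
  simp only [curtail, sum_sub_distrib, ← sum_mul, Fintype.sum_pi_single']

theorem level_curtail (s : Fin nT) : level M (x.curtail t θ) s = level M x s := by
  simp only [level, curtail, sum_sub_distrib, ← sum_mul, ← mul_sum]
  ring

theorem obj_curtail : Obj M (x.curtail t θ) = Obj M x + θ * ∑ v, M.S v * x.pD v t := by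
  simp only [Obj, curtail, mul_sub, sum_sub_distrib, mul_left_comm (M.S _), ← mul_sum,
    ← sum_mul, Fintype.sum_pi_single']
  ring

theorem feasible_curtail (hx : Feasible M x) (hθ₀ : 0 ≤ θ) (hθ₁ : θ ≤ 1)
    (hθC : θ * ∑ v, x.pD v t ≤ ∑ i, x.pC i) :
    Feasible M (x.curtail t θ) := by
  obtain ⟨hbal, hp, hd, hC, hlev, hD, hE, hend⟩ := hx
  refine ⟨fun s => ?_, hp, hd, ?_, fun s => ?_, fun v s => ?_, fun v => ?_, ?_⟩
  · simp only [curtail, sum_sub_distrib, ← mul_sum]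
    linarith [hbal s]
  · rw [sum_pC_curtail]; linarith
  · rw [level_curtail]; exact hlev s
  · simp only [curtail, Pi.single_apply]
    split_ifs with hst
    · subst hst; nlinarith [hD v s]
    · simpa using hD v s
  · rw [sum_pD_curtail]; nlinarith [hD v t, hE v]
  · simp only [sum_pC_curtail, sum_pD_curtail, sum_sub_distrib, ← mul_sum]
    simp only [sum_sub_distrib] at hend
    linarith

end Sol

theorem IsOptimal.sum_pD_eq_zero {M : MarketData nT nL nG nV} {x : Sol nT nL nG nV}
    (hopt : IsOptimal M x) (hS : ∀ v, 0 < M.S v) (hC : 0 < ∑ i, x.pC i) (t : Fin nT) :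
    ∑ v, x.pD v t = 0 := by
  obtain ⟨hx, hbest⟩ := hopt
  have hD : ∀ v s, 0 ≤ x.pD v s := hx.2.2.2.2.2.1
  by_contra hne
  have hpos : 0 < ∑ v, x.pD v t := lt_of_le_of_ne (sum_nonneg fun v _ => hD v t) (Ne.symm hne)
  obtain ⟨w, -, hw⟩ :=
    exists_lt_of_sum_lt (by simpa using hpos : ∑ v, (0 : ℝ) < ∑ v, x.pD v t)
  have hgain : 0 < ∑ v, M.S v * x.pD v t :=
    sum_pos' (fun v _ => mul_nonneg (hS v).le (hD v t)) ⟨w, mem_univ w, mul_pos (hS w) hw⟩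
  set θ := min 1 ((∑ i, x.pC i) / ∑ v, x.pD v t)
  have hθ₀ : 0 < θ := lt_min one_pos (div_pos hC hpos)
  have hθC : θ * ∑ v, x.pD v t ≤ ∑ i, x.pC i :=
    (le_div_iff₀ hpos).mp (min_le_right _ _)
  have hle := hbest _ (Sol.feasible_curtail hx hθ₀.le (min_le_left _ _) hθC)
  rw [Sol.obj_curtail] at hle
  linarith [mul_pos hθ₀ hgain]

/-- With a single time period, no optimal solution of the VLB market
clearing (with all `S_v > 0`) has simultaneously `p^{C,a}_1 > 0` and `∑_v p^{D,e}_{v,1} > 0`. -/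
theorem single_period_no_simultaneous_charge_discharge
    (M : MarketData 1 nL nG nV) (x : Sol 1 nL nG nV)
    (hS : ∀ v, 0 < M.S v) (hopt : IsOptimal M x) :
    ¬ (0 < x.pC 0 ∧ 0 < ∑ v, x.pD v 0) := by
  rintro ⟨hC, hD⟩
  have hD₀ := hopt.sum_pD_eq_zero hS (by simpa using hC) 0
  linarith
end

section
/- In the VLB market clearing applied to the same two-interval example (inter-storage of 1 MWh valued at S = 5 €/MWh entering MI2), every dual-optimal market price in MI2 lies in the interval [5, 9], and hence the storage system's surplus over the cycle is non-negative for every valid price. -/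
/-- Feasible set of the storage block in MI2 of the VLB example: intra-storage charge
`a ≥ 0` (the intra-storage must end non-negative), inter-storage discharge
`0 ≤ b ≤ 1` (1 MWh stored), combined level `a + (1 − b)` within `[0, 2.5]`
(and final level ≥ 0). -/
def StorFeas (a b : ℝ) : Prop :=
  0 ≤ a ∧ 0 ≤ b ∧ b ≤ 1 ∧ 0 ≤ a + (1 - b) ∧ a + (1 - b) ≤ 2.5

/-- `lam` is a dual-optimal market price of the VLB market clearing for MI2 of the
illustrative example (load `U=12, D̄=3`; generators `C₁=2, P̄₁=2` and `C₂=9, P̄₂=2`;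
inter-storage of 1 MWh bid at `S = 5`): there is a balanced feasible allocation at
which every block (load, generators, storage) maximizes its partial-Lagrangian term
at price `lam` — the complementary-slackness characterization of the optimal duals. -/
def DualOptVLB (lam : ℝ) : Prop :=
  ∃ d p1 p2 a b : ℝ,
    d + a - p1 - p2 - b = 0 ∧
    0 ≤ d ∧ d ≤ 3 ∧ 0 ≤ p1 ∧ p1 ≤ 2 ∧ 0 ≤ p2 ∧ p2 ≤ 2 ∧ StorFeas a b ∧
    (∀ q, 0 ≤ q → q ≤ 3 → (12 - lam) * q ≤ (12 - lam) * d) ∧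
    (∀ q, 0 ≤ q → q ≤ 2 → (lam - 2) * q ≤ (lam - 2) * p1) ∧
    (∀ q, 0 ≤ q → q ≤ 2 → (lam - 9) * q ≤ (lam - 9) * p2) ∧
    (∀ a' b', StorFeas a' b' → (lam - 5) * b' - lam * a' ≤ (lam - 5) * b - lam * a)

set_option maxHeartbeats 1000000 in
/-- In the VLB market clearing of MI2 of the two-interval example,
at every dual-optimal price the inter-storage is fully discharged (`p^{D,e} = 1`), the
price lies in `[5, 9]`, and hence the storage surplus over the cycle,
`λ · 1 − 5 · 1`, is non-negative. -/
theorem vlb_prices_in_interval :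
    ∀ lam, DualOptVLB lam → (5 ≤ lam ∧ lam ≤ 9) ∧ 0 ≤ lam * 1 - 5 * 1 ∧
      ∃ d p1 p2 a b : ℝ,
        d + a - p1 - p2 - b = 0 ∧
        0 ≤ d ∧ d ≤ 3 ∧ 0 ≤ p1 ∧ p1 ≤ 2 ∧ 0 ≤ p2 ∧ p2 ≤ 2 ∧ StorFeas a b ∧ b = 1 ∧
        (∀ q, 0 ≤ q → q ≤ 3 → (12 - lam) * q ≤ (12 - lam) * d) ∧
        (∀ q, 0 ≤ q → q ≤ 2 → (lam - 2) * q ≤ (lam - 2) * p1) ∧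
        (∀ q, 0 ≤ q → q ≤ 2 → (lam - 9) * q ≤ (lam - 9) * p2) ∧
        (∀ a' b', StorFeas a' b' → (lam - 5) * b' - lam * a' ≤ (lam - 5) * b - lam * a) := by
  intro lam h
  obtain ⟨d, p1, p2, a, b, hbal, hd0, hd3, hp10, hp12, hp20, hp22,
    ⟨ha0, hb0, hb1, hlev0, hlev1⟩, hload, hg1, hg2, hstor⟩ := h
  have h5 : 5 ≤ lam := by
    by_contra h'
    push_neg at h'
    rcases le_or_gt lam 0 with h0 | h0
    · have hp1 := hg1 0 le_rfl (by norm_num)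
      have hp2 := hg2 0 le_rfl (by norm_num)
      have hd := hload 3 (by norm_num) le_rfl
      have hp1' : p1 = 0 := by nlinarith
      have hp2' : p2 = 0 := by nlinarith
      have hd' : d = 3 := by nlinarith
      linarith
    · have hs := hstor 0 0 ⟨le_rfl, le_rfl, by norm_num, by norm_num, by norm_num⟩
      have hb : b = 0 := by nlinarith [mul_nonneg (by linarith : (0:ℝ) ≤ 5 - lam) hb0, mul_nonneg h0.le ha0]
      have ha : a = 0 := by nlinarith [mul_nonneg (by linarith : (0:ℝ) ≤ 5 - lam) hb0, mul_nonneg h0.le ha0]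
      have hd := hload 3 (by norm_num) le_rfl
      have hp2 := hg2 0 le_rfl (by norm_num)
      have hd' : d = 3 := by nlinarith
      have hp2' : p2 = 0 := by nlinarith
      linarith
  have h9 : lam ≤ 9 := by
    by_contra h'
    push_neg at h'
    have hp1 := hg1 2 (by norm_num) le_rfl
    have hp2 := hg2 2 (by norm_num) le_rfl
    have hs := hstor 0 1 ⟨le_rfl, by norm_num, le_rfl, by norm_num, by norm_num⟩
    have hp1' : p1 = 2 := by nlinarith
    have hp2' : p2 = 2 := by nlinarith
    have hb : 1 ≤ b := by
      nlinarith [hs, mul_nonneg (by linarith : (0:ℝ) ≤ lam - 9) (by linarith : (0:ℝ) ≤ 1 - b),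
        mul_nonneg (by linarith : (0:ℝ) ≤ lam) ha0]
    have ha : a ≤ 0 := by
      nlinarith [hs, mul_nonneg (by linarith : (0:ℝ) ≤ lam - 9) ha0,
        mul_nonneg (by linarith : (0:ℝ) ≤ lam - 9) (by linarith : (0:ℝ) ≤ 1 - b)]
    linarith
  refine ⟨⟨h5, h9⟩, by linarith, 3, 2, 0, 0, 1, by norm_num, by norm_num, by norm_num,
    by norm_num, by norm_num, by norm_num, by norm_num,
    ⟨le_rfl, by norm_num, le_rfl, by norm_num, by norm_num⟩, rfl,
    ?_, ?_, ?_, ?_⟩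
  · intro q hq0 hq3; nlinarith
  · intro q hq0 hq2; nlinarith
  · intro q hq0 hq2; nlinarith
  · rintro a' b' ⟨ha0', hb0', hb1', _, _⟩; nlinarith
end

section
/- Cost recovery for the VLB non-merchant storage over a cycle: assume (i) within each market interval the local (intra-storage) quantities chosen by model (4) yield non-negative revenue −sum_t λ*_t p^{C,loc}_t ≥ 0, and (ii) every unit moved to the inter-storage at price λ is only ever discharged in a later interval at a market price ≥ λ (guaranteed because the inter-storage bids price λ and discharge is voluntary, i.e., p^{D,e}_{v,t} > 0 in an optimal solution implies λ_t ≥ S_v), and (iii) the inter-storage is eventually empty at the end of the cycle. Then the storage system's total surplus over the cycle, sum over intervals of sum_t λ_t (discharge_t − charge_t) Δt, is non-negative. -/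
/-!
Split every charge into its local and moved parts. The local parts earn non-negative revenue
interval by interval. Every moved unit is charged at some price `p u` and discharged at some
price `p w`; since the inter-storage is emptied, its net contribution to the surplus is
`∑ u, ∑ w, (p w - p u) * D u w`, in which every term with `D u w > 0` has `p u ≤ p w`.
-/

open Finset

section Transport

variable {ι : Type*} [Fintype ι] (p : ι → ℝ) (D : ι → ι → ℝ)

theorem sum_mul_inflow_sub_sum_mul_outflow :
    ∑ w, p w * ∑ u, D u w - ∑ u, p u * ∑ w, D u w = ∑ u, ∑ w, (p w - p u) * D u w := by
  simp only [mul_sum, sub_mul, sum_sub_distrib]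
  rw [sum_comm (f := fun w u => p w * D u w)]

theorem transport_margin_nonneg (hD : ∀ u w, 0 ≤ D u w)
    (hp : ∀ u w, 0 < D u w → p u ≤ p w) : 0 ≤ ∑ u, ∑ w, (p w - p u) * D u w := by
  refine sum_nonneg fun u _ => sum_nonneg fun w _ => ?_
  rcases (hD u w).lt_or_eq with hpos | hzero
  · exact mul_nonneg (sub_nonneg.2 (hp u w hpos)) hpos.le
  · rw [← hzero, mul_zero]

end Transport

/-- Cost recovery for the VLB non-merchant storage over a cycle
(Δt = 1). A cycle consists of `K` market intervals of `T` periods each, with market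
prices `lam k t`. In each interval the intra-storage charge `pCa` decomposes (model (4))
into a local part `loc` and a moved part `mov` (`pCa = loc + mov`), and the inter-storage
discharge `dis` decomposes via `D u w`, the energy moved (charged) at period `u` and
discharged at period `w`. Assume:
(i) in every interval the local quantities have non-negative revenue;
(ii) every unit moved at price `lam u` is only discharged at a market price ≥ `lam u`
    (voluntary discharge: the inter-storage bids its saved price);
(iii) the inter-storage is eventually empty: all moved energy is discharged within
    the cycle.
Then the storage's total surplus over the cycle,
`∑_{k,t} λ_{k,t} (discharge_{k,t} − charge_{k,t})`, is non-negative. -/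
theorem storage_cost_recovery_over_cycle (K T : ℕ)
    (lam pCa loc mov dis : Fin K → Fin T → ℝ)
    (D : (Fin K × Fin T) → (Fin K × Fin T) → ℝ)
    (hdecomp : ∀ k t, loc k t + mov k t = pCa k t)
    (hlocrev : ∀ k, 0 ≤ -∑ t, lam k t * loc k t)
    (hD0 : ∀ u w, 0 ≤ D u w)
    (hdis : ∀ k t, dis k t = ∑ u, D u (k, t))
    (hprice : ∀ u w, 0 < D u w → lam u.1 u.2 ≤ lam w.1 w.2)
    (hempty : ∀ u, ∑ w, D u w = mov u.1 u.2) :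
    0 ≤ ∑ k, ∑ t, lam k t * (dis k t - pCa k t) := by
  set p : Fin K × Fin T → ℝ := fun x => lam x.1 x.2
  have hlocal : 0 ≤ ∑ k, -∑ t, lam k t * loc k t := sum_nonneg fun k _ => hlocrev k
  have htransport := transport_margin_nonneg p D hD0 hprice
  rw [← sum_mul_inflow_sub_sum_mul_outflow] at htransport
  have hsurplus : ∑ k, ∑ t, lam k t * (dis k t - pCa k t)
      = ∑ k, -∑ t, lam k t * loc k t + (∑ w, p w * ∑ u, D u w - ∑ u, p u * ∑ w, D u w) := by
    simp only [p, hempty, Fintype.sum_prod_type, ← hdis, ← hdecomp, ← sum_neg_distrib,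
      ← sum_sub_distrib, ← sum_add_distrib]
    refine sum_congr rfl fun k _ => sum_congr rfl fun t _ => by ring
  rw [hsurplus]
  exact add_nonneg hlocal htransport
end

section
/- There exist problem instances in which the VLB market clearing yields strictly lower social welfare than the split market clearing with the same end-of-interval levels: in the six-interval example of Table IV, split clearing attains 842.5 while VLB clearing attains 772.5. -/
/-- Single-interval (one-hour) split market clearing with one load and one generator:
the storage net charge is fixed to `pC = E^end − E^init` by the end-level constraint.
Storage capacity 2.5 MWh. -/
def FeasS (Einit Eend Dbar Pbar : ℝ) (d p : ℝ) : Prop :=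
  d + (Eend - Einit) - p = 0 ∧ 0 ≤ d ∧ d ≤ Dbar ∧ 0 ≤ p ∧ p ≤ Pbar ∧
  0 ≤ Eend ∧ Eend ≤ 2.5

/-- Optimality for the single-interval split market clearing. -/
def OptS (U C Einit Eend Dbar Pbar : ℝ) (d p : ℝ) : Prop :=
  FeasS Einit Eend Dbar Pbar d p ∧
    ∀ d' p', FeasS Einit Eend Dbar Pbar d' p' → U * d' - C * p' ≤ U * d - C * p

/-- Single-interval (one-hour) VLB market clearing with one load and one generator:
inter-storage energy `Ein` bid at price `S`; `a` intra-storage charge (non-negative at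
the end of the single period), `b` inter-storage discharge, combined level within
`[0, 2.5]`, final level at least `Eend`. -/
def FeasV (Ein Eend Dbar Pbar : ℝ) (d p a b : ℝ) : Prop :=
  d + a - p - b = 0 ∧ 0 ≤ d ∧ d ≤ Dbar ∧ 0 ≤ p ∧ p ≤ Pbar ∧
  0 ≤ a ∧ 0 ≤ b ∧ b ≤ Ein ∧
  0 ≤ a + (Ein - b) ∧ a + (Ein - b) ≤ 2.5 ∧ Eend ≤ a + (Ein - b)

/-- Optimality for the single-interval VLB market clearing. -/
def OptV (U C S Ein Eend Dbar Pbar : ℝ) (d p a b : ℝ) : Prop :=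
  FeasV Ein Eend Dbar Pbar d p a b ∧
    ∀ d' p' a' b', FeasV Ein Eend Dbar Pbar d' p' a' b' →
      U * d' - C * p' - S * b' ≤ U * d - C * p - S * b

/-!
In every interval the clearing problem is a small LP whose optimum is explicit: the load is
served in full, and stored energy is discharged only when its price undercuts the generator.
Under split clearing the end levels fix the net charge, so the storage discharges in intervals
2, 4 and 6 and charges in 1, 3 and 5. Under VLB clearing the 2.5 MWh charged in interval 1 are
bid at 20 €/MWh, above the costs 15 and 1 of intervals 2–5: the storage holds them until
interval 6, losing the discharges of intervals 2 and 4 (37.5 each) and gaining only the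
charging cost saved in intervals 3 and 5 (2.5 each), so 842.5 − 70 = 772.5.
-/

section Split

variable {U C Einit Eend Dbar Pbar d p d' p' : ℝ}

theorem OptS.welfare_eq (h : OptS U C Einit Eend Dbar Pbar d p)
    (h' : OptS U C Einit Eend Dbar Pbar d' p') : U * d - C * p = U * d' - C * p' :=
  le_antisymm (h'.2 d p h.1) (h.2 d' p' h'.1)

theorem optS_full_demand (hCU : C ≤ U)
    (hw : FeasS Einit Eend Dbar Pbar Dbar (Dbar + (Eend - Einit))) :
    OptS U C Einit Eend Dbar Pbar Dbar (Dbar + (Eend - Einit)) := by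
  refine ⟨hw, fun d' p' ⟨hbal, _, hd', _⟩ => ?_⟩
  obtain rfl : p' = d' + (Eend - Einit) := by linarith
  nlinarith [mul_le_mul_of_nonneg_left hd' (sub_nonneg.2 hCU)]

theorem OptS.welfare_eq_full_demand (hCU : C ≤ U)
    (hw : FeasS Einit Eend Dbar Pbar Dbar (Dbar + (Eend - Einit)))
    (h : OptS U C Einit Eend Dbar Pbar d p) :
    U * d - C * p = U * Dbar - C * (Dbar + (Eend - Einit)) :=
  h.welfare_eq (optS_full_demand hCU hw)

end Split

section VLB

variable {U C S Ein Eend Dbar Pbar d p a b d' p' a' b' : ℝ}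

theorem OptV.objective_eq (h : OptV U C S Ein Eend Dbar Pbar d p a b)
    (h' : OptV U C S Ein Eend Dbar Pbar d' p' a' b') :
    U * d - C * p - S * b = U * d' - C * p' - S * b' :=
  le_antisymm (h'.2 d p a b h.1) (h.2 d' p' a' b' h'.1)

theorem FeasV.max_le_charge (h : FeasV Ein Eend Dbar Pbar d p a b) :
    max 0 (Eend - Ein) ≤ a := by
  obtain ⟨-, -, -, -, -, ha, hb, -, -, -, hE⟩ := h
  exact max_le ha (by linarith)

theorem optV_hold (hCU : C ≤ U) (hC : 0 ≤ C) (hS : C ≤ S ∨ Ein = 0)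
    (hw : FeasV Ein Eend Dbar Pbar Dbar (Dbar + max 0 (Eend - Ein)) (max 0 (Eend - Ein)) 0) :
    OptV U C S Ein Eend Dbar Pbar Dbar (Dbar + max 0 (Eend - Ein)) (max 0 (Eend - Ein)) 0 := by
  refine ⟨hw, fun d' p' a' b' h' => ?_⟩
  have ha' := h'.max_le_charge
  obtain ⟨hbal, -, hd', -, -, -, hb', hbE, -⟩ := h'
  have hdis : (C - S) * b' ≤ 0 := by
    rcases hS with hS | rfl
    · exact mul_nonpos_of_nonpos_of_nonneg (by linarith) hb'
    · rw [le_antisymm hbE hb', mul_zero]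
  obtain rfl : p' = d' + a' - b' := by linarith
  nlinarith [mul_le_mul_of_nonneg_left hd' (sub_nonneg.2 hCU), mul_le_mul_of_nonneg_left ha' hC]

theorem OptV.discharge_eq_zero (hCU : C ≤ U) (hC : 0 ≤ C) (hS : C < S ∨ Ein = 0)
    (hw : FeasV Ein Eend Dbar Pbar Dbar (Dbar + max 0 (Eend - Ein)) (max 0 (Eend - Ein)) 0)
    (h : OptV U C S Ein Eend Dbar Pbar d p a b) : b = 0 := by
  have hopt := h.2 _ _ _ _ hw
  have ha := h.1.max_le_charge
  obtain ⟨hbal, -, hd, -, -, -, hb, hbE, -⟩ := h.1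
  rcases hS with hS | rfl
  · obtain rfl : p = d + a - b := by linarith
    nlinarith [mul_le_mul_of_nonneg_left hd (sub_nonneg.2 hCU), mul_le_mul_of_nonneg_left ha hC]
  · exact le_antisymm hbE hb

theorem OptV.welfare_eq_of_hold (hCU : C ≤ U) (hC : 0 ≤ C) (hS : C < S ∨ Ein = 0)
    (hw : FeasV Ein Eend Dbar Pbar Dbar (Dbar + max 0 (Eend - Ein)) (max 0 (Eend - Ein)) 0)
    (h : OptV U C S Ein Eend Dbar Pbar d p a b) :
    U * d - C * p = U * Dbar - C * (Dbar + max 0 (Eend - Ein)) := by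
  have hobj := h.objective_eq (optV_hold hCU hC (hS.imp le_of_lt id) hw)
  rw [h.discharge_eq_zero hCU hC hS hw] at hobj
  linarith

theorem optV_discharge (hCU : C ≤ U) (hS : 0 ≤ S) (hSC : S ≤ C)
    (hw : FeasV Ein Eend Dbar Pbar Dbar (Dbar - (Ein - Eend)) 0 (Ein - Eend)) :
    OptV U C S Ein Eend Dbar Pbar Dbar (Dbar - (Ein - Eend)) 0 (Ein - Eend) := by
  refine ⟨hw, fun d' p' a' b' ⟨hbal, _, hd', _, _, ha', _, _, _, _, hE⟩ => ?_⟩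
  obtain rfl : p' = d' + a' - b' := by linarith
  have hb' : b' ≤ a' + (Ein - Eend) := by linarith
  nlinarith [mul_le_mul_of_nonneg_left hd' (sub_nonneg.2 hCU),
    mul_le_mul_of_nonneg_left hb' (sub_nonneg.2 hSC), mul_nonneg hS ha']

theorem OptV.discharge_eq_sub (hCU : C ≤ U) (hS : 0 < S) (hSC : S < C)
    (hw : FeasV Ein Eend Dbar Pbar Dbar (Dbar - (Ein - Eend)) 0 (Ein - Eend))
    (h : OptV U C S Ein Eend Dbar Pbar d p a b) : b = Ein - Eend := by
  have hopt := h.2 _ _ _ _ hw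
  obtain ⟨hbal, -, hd, -, -, ha, -, -, -, -, hE⟩ := h.1
  obtain rfl : p = d + a - b := by linarith
  have hdU := mul_le_mul_of_nonneg_left hd (sub_nonneg.2 hCU)
  -- a positive bid makes any extra intra-storage charge a pure loss
  have ha0 : a = 0 := by
    have hb : b ≤ a + (Ein - Eend) := by linarith
    nlinarith [mul_le_mul_of_nonneg_left hb (sub_nonneg.2 hSC.le), mul_nonneg hS.le ha]
  subst ha0
  nlinarith

theorem OptV.welfare_eq_of_discharge (hCU : C ≤ U) (hS : 0 < S) (hSC : S < C)
    (hw : FeasV Ein Eend Dbar Pbar Dbar (Dbar - (Ein - Eend)) 0 (Ein - Eend))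
    (h : OptV U C S Ein Eend Dbar Pbar d p a b) :
    U * d - C * p = U * Dbar - C * (Dbar - (Ein - Eend)) := by
  have hobj := h.objective_eq (optV_discharge hCU hS.le hSC.le hw)
  rw [h.discharge_eq_sub hCU hS hSC hw] at hobj
  linarith

end VLB

/-- In the six-interval example of Table IV (load `D=10, U=25`,
generator `P̄=15` with costs `20, 15, 1, 15, 1, 21`, end levels
`2.5, 0, 2.5, 0, 2.5, 0`; in the VLB clearing the 2.5 MWh charged in interval 1 enter
the inter-storage with bid price 20, and are only discharged in interval 6), the split
market clearing attains total social welfare 842.5 while the VLB clearing attains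
772.5: VLB can yield strictly lower welfare than split clearing. -/
theorem table4_vlb_welfare_lower_than_split :
    (∃ d1 p1 d2 p2 d3 p3 d4 p4 d5 p5 d6 p6 : ℝ,
      OptS 25 20 0 2.5 10 15 d1 p1 ∧ OptS 25 15 2.5 0 10 15 d2 p2 ∧
      OptS 25 1 0 2.5 10 15 d3 p3 ∧ OptS 25 15 2.5 0 10 15 d4 p4 ∧
      OptS 25 1 0 2.5 10 15 d5 p5 ∧ OptS 25 21 2.5 0 10 15 d6 p6) ∧
    (∀ d1 p1 d2 p2 d3 p3 d4 p4 d5 p5 d6 p6 : ℝ,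
      OptS 25 20 0 2.5 10 15 d1 p1 → OptS 25 15 2.5 0 10 15 d2 p2 →
      OptS 25 1 0 2.5 10 15 d3 p3 → OptS 25 15 2.5 0 10 15 d4 p4 →
      OptS 25 1 0 2.5 10 15 d5 p5 → OptS 25 21 2.5 0 10 15 d6 p6 →
      (25 * d1 - 20 * p1) + (25 * d2 - 15 * p2) + (25 * d3 - 1 * p3)
        + (25 * d4 - 15 * p4) + (25 * d5 - 1 * p5) + (25 * d6 - 21 * p6) = 842.5) ∧
    (∃ d1 p1 a1 b1 d2 p2 a2 b2 d3 p3 a3 b3 d4 p4 a4 b4 d5 p5 a5 b5 d6 p6 a6 b6 : ℝ,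
      OptV 25 20 20 0 2.5 10 15 d1 p1 a1 b1 ∧ OptV 25 15 20 2.5 0 10 15 d2 p2 a2 b2 ∧
      OptV 25 1 20 2.5 2.5 10 15 d3 p3 a3 b3 ∧ OptV 25 15 20 2.5 0 10 15 d4 p4 a4 b4 ∧
      OptV 25 1 20 2.5 2.5 10 15 d5 p5 a5 b5 ∧ OptV 25 21 20 2.5 0 10 15 d6 p6 a6 b6) ∧
    (∀ d1 p1 a1 b1 d2 p2 a2 b2 d3 p3 a3 b3 d4 p4 a4 b4 d5 p5 a5 b5 d6 p6 a6 b6 : ℝ,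
      OptV 25 20 20 0 2.5 10 15 d1 p1 a1 b1 → OptV 25 15 20 2.5 0 10 15 d2 p2 a2 b2 →
      OptV 25 1 20 2.5 2.5 10 15 d3 p3 a3 b3 → OptV 25 15 20 2.5 0 10 15 d4 p4 a4 b4 →
      OptV 25 1 20 2.5 2.5 10 15 d5 p5 a5 b5 → OptV 25 21 20 2.5 0 10 15 d6 p6 a6 b6 →
      (25 * d1 - 20 * p1) + (25 * d2 - 15 * p2) + (25 * d3 - 1 * p3)
        + (25 * d4 - 15 * p4) + (25 * d5 - 1 * p5) + (25 * d6 - 21 * p6) = 772.5) ∧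
    (772.5 : ℝ) < 842.5 := by
  refine ⟨?_, fun d1 p1 d2 p2 d3 p3 d4 p4 d5 p5 d6 p6 h1 h2 h3 h4 h5 h6 => ?_, ?_,
    fun d1 p1 a1 b1 d2 p2 a2 b2 d3 p3 a3 b3 d4 p4 a4 b4 d5 p5 a5 b5 d6 p6 a6 b6
      h1 h2 h3 h4 h5 h6 => ?_, by norm_num⟩
  · refine ⟨_, _, _, _, _, _, _, _, _, _, _, _, optS_full_demand ?_ ?_,
      optS_full_demand ?_ ?_, optS_full_demand ?_ ?_, optS_full_demand ?_ ?_,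
      optS_full_demand ?_ ?_, optS_full_demand ?_ ?_⟩ <;> norm_num [FeasS]
  · have e1 := h1.welfare_eq_full_demand (by norm_num) (by norm_num [FeasS])
    have e2 := h2.welfare_eq_full_demand (by norm_num) (by norm_num [FeasS])
    have e3 := h3.welfare_eq_full_demand (by norm_num) (by norm_num [FeasS])
    have e4 := h4.welfare_eq_full_demand (by norm_num) (by norm_num [FeasS])
    have e5 := h5.welfare_eq_full_demand (by norm_num) (by norm_num [FeasS])
    have e6 := h6.welfare_eq_full_demand (by norm_num) (by norm_num [FeasS])
    linarith
  · refine ⟨_, _, _, _, _, _, _, _, _, _, _, _, _, _, _, _, _, _, _, _, _, _, _, _,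
      optV_hold ?_ ?_ ?_ ?_, optV_hold ?_ ?_ ?_ ?_, optV_hold ?_ ?_ ?_ ?_,
      optV_hold ?_ ?_ ?_ ?_, optV_hold ?_ ?_ ?_ ?_, optV_discharge ?_ ?_ ?_ ?_⟩ <;>
      norm_num [FeasV]
  · have e1 := h1.welfare_eq_of_hold (by norm_num) (by norm_num) (by norm_num)
      (by norm_num [FeasV])
    have e2 := h2.welfare_eq_of_hold (by norm_num) (by norm_num) (by norm_num)
      (by norm_num [FeasV])
    have e3 := h3.welfare_eq_of_hold (by norm_num) (by norm_num) (by norm_num)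
      (by norm_num [FeasV])
    have e4 := h4.welfare_eq_of_hold (by norm_num) (by norm_num) (by norm_num)
      (by norm_num [FeasV])
    have e5 := h5.welfare_eq_of_hold (by norm_num) (by norm_num) (by norm_num)
      (by norm_num [FeasV])
    have e6 := h6.welfare_eq_of_discharge (by norm_num) (by norm_num) (by norm_num)
      (by norm_num [FeasV])
    norm_num at e1 e2 e3 e4 e5 e6 ⊢
    linarith
end
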